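/- Let H₁ and H₂ be finite-dimensional complex Hilbert spaces and let ϱ be a separable density operator on H₁ ⊗ H₂. Then ‖ϱ‖_γ ≤ 1, where ‖·‖_γ is the greatest cross norm associated with the trace norms. -/

import Mathlib

open scoped Kronecker ComplexOrder

/-- The trace norm `‖x‖₁ = tr((x* x)^{1/2})` of a matrix (operator on a
finite-dimensional complex Hilbert space). -/
noncomputable def traceNorm {n : Type*} [Fintype n] [DecidableEq n]
    (x : Matrix n n ℂ) : ℝ :=
  ((Matrix.posSemidef_conjTranspose_mul_self x).1.eigenvectorUnitary.1 *
      Matrix.diagonal ((fun r : ℝ => (r : ℂ)) ∘ (Real.sqrt ∘ (Matrix.posSemidef_conjTranspose_mul_self x).1.eigenvalues)) *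
      (star (Matrix.posSemidef_conjTranspose_mul_self x).1.eigenvectorUnitary : Matrix n n ℂ)).trace.re

/-- A density operator: positive semidefinite with trace one. -/
def IsDensityOp {n : Type*} [Fintype n] [DecidableEq n] (ρ : Matrix n n ℂ) : Prop :=
  ρ.PosSemidef ∧ ρ.trace = 1

/-- The greatest cross norm (projective norm) associated with the trace norms:
`‖t‖_γ = inf { ∑ ‖u i‖₁ ‖v i‖₁ : t = ∑ u i ⊗ v i }`, the infimum running over all
finite decompositions of `t` into elementary tensors. -/
noncomputable def crossNorm {m n : Type*} [Fintype m] [DecidableEq m]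
    [Fintype n] [DecidableEq n] (t : Matrix (m × n) (m × n) ℂ) : ℝ :=
  sInf { r : ℝ | ∃ (k : ℕ) (u : Fin k → Matrix m m ℂ) (v : Fin k → Matrix n n ℂ),
    t = ∑ i, u i ⊗ₖ v i ∧ r = ∑ i, traceNorm (u i) * traceNorm (v i) }

/-- Separability: `ϱ = ∑ i, ω i • ρ₁ i ⊗ ρ₂ i` with `ω i > 0` and `ρ₁ i`, `ρ₂ i`
density operators, the sum converging in trace norm. -/
def IsSeparableState {m n : Type*} [Fintype m] [DecidableEq m]
    [Fintype n] [DecidableEq n] (ϱ : Matrix (m × n) (m × n) ℂ) : Prop :=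
  ∃ (ω : ℕ → ℝ) (ρ₁ : ℕ → Matrix m m ℂ) (ρ₂ : ℕ → Matrix n n ℂ),
    (∀ i, 0 < ω i) ∧ (∀ i, IsDensityOp (ρ₁ i)) ∧ (∀ i, IsDensityOp (ρ₂ i)) ∧
    Filter.Tendsto
      (fun N => traceNorm (ϱ - ∑ i ∈ Finset.range N, (ω i : ℂ) • (ρ₁ i ⊗ₖ ρ₂ i)))
      Filter.atTop (nhds 0)

/-!
Truncating the separable decomposition gives `ϱ = S_N + r_N` with
`S_N = ∑_{i<N} ω_i ρ₁_i ⊗ ρ₂_i` and `‖r_N‖₁ → 0`. The cross norm is subadditive, the term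
`ω_i ρ₁_i ⊗ ρ₂_i` costs `ω_i`, and expanding `r_N` in matrix units costs at most a dimensional
constant times `‖r_N‖₁`, since every entry of a matrix is bounded by its trace norm. As
`∑_{i<N} ω_i = tr S_N = 1 - tr r_N`, this gives `‖ϱ‖_γ ≤ 1 + C ‖r_N‖₁` for every `N`.
-/

open Matrix
open scoped MatrixOrder

section TraceNorm

variable {n : Type*} [Fintype n]

lemma re_trace_conjTranspose_mul_self (x : Matrix n n ℂ) :
    (xᴴ * x).trace.re = ∑ i, ∑ j, ‖x i j‖ ^ 2 := by
  rw [Finset.sum_comm, trace, Complex.re_sum]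
  refine Finset.sum_congr rfl fun j _ => ?_
  rw [diag_apply, mul_apply, Complex.re_sum]
  refine Finset.sum_congr rfl fun i _ => ?_
  rw [conjTranspose_apply, Complex.sq_norm, Complex.normSq_apply, Complex.star_def,
    Complex.mul_re, Complex.conj_re, Complex.conj_im]
  ring

variable [DecidableEq n]

lemma traceNorm_eq_sum_sqrt_eigenvalues (x : Matrix n n ℂ) :
    traceNorm x = ∑ i, √((posSemidef_conjTranspose_mul_self x).1.eigenvalues i) := by
  rw [traceNorm, trace_mul_cycle, UnitaryGroup.star_mul_self, one_mul, trace_diagonal,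
    Complex.re_sum]
  rfl

lemma traceNorm_nonneg (x : Matrix n n ℂ) : 0 ≤ traceNorm x := by
  rw [traceNorm_eq_sum_sqrt_eigenvalues]
  exact Finset.sum_nonneg fun i _ => Real.sqrt_nonneg _

lemma traceNorm_eq_re_trace_sqrt (x : Matrix n n ℂ) :
    traceNorm x = (CFC.sqrt (xᴴ * x)).trace.re := by
  have hx := posSemidef_conjTranspose_mul_self x
  rw [CFC.sqrt_eq_cfc, cfc_nnreal_eq_real _ (xᴴ * x), hx.1.cfc_eq, traceNorm]
  simp only [IsHermitian.cfc, Unitary.conjStarAlgAut_apply]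
  congr 5
  funext i
  simp [Real.coe_sqrt, hx.eigenvalues_nonneg i]

lemma Matrix.PosSemidef.traceNorm_eq {p : Matrix n n ℂ} (hp : p.PosSemidef) :
    traceNorm p = p.trace.re := by
  rw [traceNorm_eq_re_trace_sqrt, hp.isHermitian.eq, ← sq, CFC.sqrt_sq p hp.nonneg]

lemma IsDensityOp.traceNorm_eq_one {ρ : Matrix n n ℂ} (hρ : IsDensityOp ρ) :
    traceNorm ρ = 1 := by
  rw [PosSemidef.traceNorm_eq hρ.1, hρ.2, Complex.one_re]

lemma norm_apply_le_traceNorm (x : Matrix n n ℂ) (i j : n) : ‖x i j‖ ≤ traceNorm x := by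
  have hx := (posSemidef_conjTranspose_mul_self x).1
  have hentry : ‖x i j‖ ^ 2 ≤ ∑ a, ∑ b, ‖x a b‖ ^ 2 :=
    (Finset.single_le_sum (f := fun b => ‖x i b‖ ^ 2) (fun _ _ => sq_nonneg _)
      (Finset.mem_univ j)).trans
    (Finset.single_le_sum (f := fun a => ∑ b, ‖x a b‖ ^ 2)
      (fun _ _ => Finset.sum_nonneg fun _ _ => sq_nonneg _) (Finset.mem_univ i))
  have heig : ∑ a, ∑ b, ‖x a b‖ ^ 2 = ∑ k, √(hx.eigenvalues k) ^ 2 := by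
    rw [← re_trace_conjTranspose_mul_self, hx.trace_eq_sum_eigenvalues, Complex.re_sum]
    simp [Real.sq_sqrt ((posSemidef_conjTranspose_mul_self x).eigenvalues_nonneg _)]
  have hsq : ‖x i j‖ ^ 2 ≤ traceNorm x ^ 2 := by
    rw [traceNorm_eq_sum_sqrt_eigenvalues]
    exact hentry.trans (heig.le.trans
      (Finset.sum_sq_le_sq_sum_of_nonneg fun _ _ => Real.sqrt_nonneg _))
  exact (pow_le_pow_iff_left₀ (norm_nonneg _) (traceNorm_nonneg x) two_ne_zero).mp hsq

lemma traceNorm_single (a b : n) (c : ℂ) : traceNorm (single a b c) = ‖c‖ := by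
  have hsq :
      single b b (‖c‖ : ℂ) * single b b (‖c‖ : ℂ) = (single a b c)ᴴ * single a b c := by
    rw [conjTranspose_single, single_mul_single_same, single_mul_single_same,
      Complex.star_def, ← Complex.normSq_eq_conj_mul_self, Complex.normSq_eq_norm_sq,
      sq, Complex.ofReal_mul]
  have hnonneg : 0 ≤ single b b (‖c‖ : ℂ) := by
    rw [← diagonal_single]
    exact (PosSemidef.diagonal <| Pi.single_nonneg.mpr <|
      Complex.zero_le_real.mpr (norm_nonneg c)).nonneg
  rw [traceNorm_eq_re_trace_sqrt, CFC.sqrt_unique hsq hnonneg, trace_single_eq_same,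
    Complex.ofReal_re]

lemma abs_re_trace_le_card_mul_traceNorm (x : Matrix n n ℂ) :
    |x.trace.re| ≤ Fintype.card n * traceNorm x :=
  calc |x.trace.re| ≤ ‖x.trace‖ := Complex.abs_re_le_norm _
    _ ≤ ∑ i, ‖x i i‖ := norm_sum_le _ _
    _ ≤ ∑ _i : n, traceNorm x := Finset.sum_le_sum fun i _ => norm_apply_le_traceNorm x i i
    _ = Fintype.card n * traceNorm x := by simp

end TraceNorm

section CrossNorm

variable {m n : Type*} [Fintype m] [DecidableEq m] [Fintype n] [DecidableEq n]

def crossNormCosts (t : Matrix (m × n) (m × n) ℂ) : Set ℝ :=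
  { r : ℝ | ∃ (k : ℕ) (u : Fin k → Matrix m m ℂ) (v : Fin k → Matrix n n ℂ),
    t = ∑ i, u i ⊗ₖ v i ∧ r = ∑ i, traceNorm (u i) * traceNorm (v i) }

lemma crossNorm_eq_sInf_crossNormCosts (t : Matrix (m × n) (m × n) ℂ) :
    crossNorm t = sInf (crossNormCosts t) :=
  rfl

lemma sum_mem_crossNormCosts {ι : Type*} [Fintype ι] {t : Matrix (m × n) (m × n) ℂ}
    (u : ι → Matrix m m ℂ) (v : ι → Matrix n n ℂ) (h : t = ∑ i, u i ⊗ₖ v i) :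
    ∑ i, traceNorm (u i) * traceNorm (v i) ∈ crossNormCosts t := by
  let e := Fintype.equivFin ι
  refine ⟨Fintype.card ι, u ∘ e.symm, v ∘ e.symm, ?_, ?_⟩
  · rw [h]
    exact Fintype.sum_equiv e _ _ fun i => by simp
  · exact Fintype.sum_equiv e _ _ fun i => by simp

lemma bddBelow_crossNormCosts (t : Matrix (m × n) (m × n) ℂ) :
    BddBelow (crossNormCosts t) := by
  refine ⟨0, ?_⟩
  rintro r ⟨k, u, v, -, rfl⟩
  exact Finset.sum_nonneg fun i _ => mul_nonneg (traceNorm_nonneg _) (traceNorm_nonneg _)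

lemma crossNorm_le_of_eq_sum {ι : Type*} [Fintype ι] {t : Matrix (m × n) (m × n) ℂ}
    (u : ι → Matrix m m ℂ) (v : ι → Matrix n n ℂ) (h : t = ∑ i, u i ⊗ₖ v i) :
    crossNorm t ≤ ∑ i, traceNorm (u i) * traceNorm (v i) :=
  csInf_le (bddBelow_crossNormCosts t) (sum_mem_crossNormCosts u v h)

lemma crossNorm_kronecker_le (u : Matrix m m ℂ) (v : Matrix n n ℂ) :
    crossNorm (u ⊗ₖ v) ≤ traceNorm u * traceNorm v := by
  simpa using crossNorm_le_of_eq_sum (ι := Unit) (fun _ => u) (fun _ => v) (by simp)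

lemma crossNorm_zero_le : crossNorm (0 : Matrix (m × n) (m × n) ℂ) ≤ 0 := by
  simpa using crossNorm_le_of_eq_sum (ι := Empty) (m := m) (n := n) isEmptyElim isEmptyElim
    (by simp)

lemma add_mem_crossNormCosts {t s : Matrix (m × n) (m × n) ℂ} {a b : ℝ}
    (ha : a ∈ crossNormCosts t) (hb : b ∈ crossNormCosts s) :
    a + b ∈ crossNormCosts (t + s) := by
  obtain ⟨k, u, v, rfl, rfl⟩ := ha
  obtain ⟨l, u', v', rfl, rfl⟩ := hb
  simpa [Fintype.sum_sum_type] using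
    sum_mem_crossNormCosts (Sum.elim u u') (Sum.elim v v') (by simp [Fintype.sum_sum_type])

lemma eq_sum_single_kronecker_single (t : Matrix (m × n) (m × n) ℂ) :
    t = ∑ p : (m × n) × (m × n),
      single p.1.1 p.2.1 (t p.1 p.2) ⊗ₖ single p.1.2 p.2.2 1 := by
  simp only [single_kronecker_single, mul_one]
  rw [Fintype.sum_prod_type]
  exact matrix_eq_sum_single t

lemma sum_norm_mem_crossNormCosts (t : Matrix (m × n) (m × n) ℂ) :
    ∑ p : (m × n) × (m × n), ‖t p.1 p.2‖ ∈ crossNormCosts t := by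
  simpa [traceNorm_single] using sum_mem_crossNormCosts _ _ (eq_sum_single_kronecker_single t)

lemma crossNorm_add_le (t s : Matrix (m × n) (m × n) ℂ) :
    crossNorm (t + s) ≤ crossNorm t + crossNorm s := by
  rw [crossNorm_eq_sInf_crossNormCosts, crossNorm_eq_sInf_crossNormCosts,
    crossNorm_eq_sInf_crossNormCosts,
    ← csInf_add ⟨_, sum_norm_mem_crossNormCosts t⟩ (bddBelow_crossNormCosts t)
      ⟨_, sum_norm_mem_crossNormCosts s⟩ (bddBelow_crossNormCosts s)]
  refine csInf_le_csInf (bddBelow_crossNormCosts _) (Set.add_nonempty.mpr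
    ⟨⟨_, sum_norm_mem_crossNormCosts t⟩, ⟨_, sum_norm_mem_crossNormCosts s⟩⟩) ?_
  rintro _ ⟨a, ha, b, hb, rfl⟩
  exact add_mem_crossNormCosts ha hb

lemma crossNorm_sum_le {ι : Type*} (s : Finset ι) (t : ι → Matrix (m × n) (m × n) ℂ) :
    crossNorm (∑ i ∈ s, t i) ≤ ∑ i ∈ s, crossNorm (t i) :=
  Finset.le_sum_of_subadditive (crossNorm (m := m) (n := n)) crossNorm_zero_le crossNorm_add_le
    s t

lemma crossNorm_le_card_mul_traceNorm (t : Matrix (m × n) (m × n) ℂ) :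
    crossNorm t ≤ Fintype.card ((m × n) × (m × n)) * traceNorm t :=
  calc crossNorm t ≤ ∑ p : (m × n) × (m × n), ‖t p.1 p.2‖ :=
        csInf_le (bddBelow_crossNormCosts t) (sum_norm_mem_crossNormCosts t)
    _ ≤ ∑ _p : (m × n) × (m × n), traceNorm t :=
        Finset.sum_le_sum fun p _ => norm_apply_le_traceNorm t p.1 p.2
    _ = Fintype.card ((m × n) × (m × n)) * traceNorm t := by simp

lemma IsDensityOp.crossNorm_smul_kronecker_le {ρ₁ : Matrix m m ℂ} {ρ₂ : Matrix n n ℂ}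
    (h₁ : IsDensityOp ρ₁) (h₂ : IsDensityOp ρ₂) {c : ℝ} (hc : 0 ≤ c) :
    crossNorm ((c : ℂ) • (ρ₁ ⊗ₖ ρ₂)) ≤ c := by
  have hcρ₁ : traceNorm ((c : ℂ) • ρ₁) = c := by
    rw [PosSemidef.traceNorm_eq (h₁.1.smul (Complex.zero_le_real.mpr hc)), trace_smul, h₁.2,
      smul_eq_mul, mul_one, Complex.ofReal_re]
  rw [← smul_kronecker]
  simpa only [hcρ₁, h₂.traceNorm_eq_one, mul_one] using
    crossNorm_kronecker_le ((c : ℂ) • ρ₁) ρ₂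

lemma IsDensityOp.trace_smul_kronecker {ρ₁ : Matrix m m ℂ} {ρ₂ : Matrix n n ℂ}
    (h₁ : IsDensityOp ρ₁) (h₂ : IsDensityOp ρ₂) (c : ℂ) :
    (c • (ρ₁ ⊗ₖ ρ₂)).trace = c := by
  rw [trace_smul, trace_kronecker, h₁.2, h₂.2, mul_one, smul_eq_mul, mul_one]

end CrossNorm

/-- A separable density operator `ϱ` on `H₁ ⊗ H₂` has greatest cross norm at most `1`. -/
theorem crossNorm_le_one_of_separable {m n : Type*} [Fintype m] [DecidableEq m]
    [Fintype n] [DecidableEq n] (ϱ : Matrix (m × n) (m × n) ℂ)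
    (hϱ : IsDensityOp ϱ) (hsep : IsSeparableState ϱ) :
    crossNorm ϱ ≤ 1 := by
  obtain ⟨ω, ρ₁, ρ₂, hω, h₁, h₂, hconv⟩ := hsep
  set S : ℕ → Matrix (m × n) (m × n) ℂ :=
    fun N => ∑ i ∈ Finset.range N, (ω i : ℂ) • (ρ₁ i ⊗ₖ ρ₂ i)
  set C : ℝ := Fintype.card (m × n) + Fintype.card ((m × n) × (m × n))
  have hbound (N : ℕ) : crossNorm ϱ ≤ 1 + C * traceNorm (ϱ - S N) := by
    have hS : crossNorm (S N) ≤ ∑ i ∈ Finset.range N, ω i :=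
      (crossNorm_sum_le _ _).trans <| Finset.sum_le_sum fun i _ =>
        (h₁ i).crossNorm_smul_kronecker_le (h₂ i) (hω i).le
    have htrace : ∑ i ∈ Finset.range N, ω i = 1 - (ϱ - S N).trace.re := by
      rw [trace_sub, hϱ.2, trace_sum, Finset.sum_congr rfl fun i _ =>
        (h₁ i).trace_smul_kronecker (h₂ i) _]
      simp
    have hrem := abs_le.mp (abs_re_trace_le_card_mul_traceNorm (ϱ - S N))
    calc crossNorm ϱ = crossNorm (S N + (ϱ - S N)) := by rw [add_sub_cancel]
      _ ≤ crossNorm (S N) + crossNorm (ϱ - S N) := crossNorm_add_le _ _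
      _ ≤ 1 + C * traceNorm (ϱ - S N) := by
        have hrest := crossNorm_le_card_mul_traceNorm (ϱ - S N)
        rw [add_mul]
        linarith
  have hlim : Filter.Tendsto (fun N => 1 + C * traceNorm (ϱ - S N)) Filter.atTop (nhds 1) := by
    simpa only [mul_zero, add_zero] using (hconv.const_mul C).const_add 1
  exact ge_of_tendsto hlim (Filter.Eventually.of_forall hbound)
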